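/- Let n, n_{v1}, n_{v2}, n_y be positive integers and n_v = n_{v1} + n_{v2}. Let B, B_1, B_3 ∈ ℝ^{n×n_{v1}}, B_2, B_4 ∈ ℝ^{n×n_{v2}}, C, C_1, C_2 ∈ ℝ^{n_y×n}, D, D_2, D_4 ∈ ℝ^{n_y×n_{v2}}, D_1, D_3 ∈ ℝ^{n_y×n_{v1}}. Form B̃ = [[B, 0, 0, 0],[B_1, B_2, B_3, B_4]] ∈ ℝ^{2n×2n_v}, C̃ = [[C, 0],[C_1, C_2]] ∈ ℝ^{2n_y×2n}, D̃ = [[0, D, 0, 0],[D_1, D_2, D_3, D_4]] ∈ ℝ^{2n_y×2n_v} (block columns of B̃ and D̃ of widths n_{v1}, n_{v2}, n_{v1}, n_{v2}). Then B̃ J_{n_v} D̃ᵀ = -J_n C̃ᵀ holds if and only if the following three equations hold: C_2 = -D_3 Bᵀ, B_4 Dᵀ = -Cᵀ, and C_1 = D_4 B_2ᵀ + D_3 B_1ᵀ - D_2 B_4ᵀ - D_1 B_3ᵀ. -/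

import Mathlib

open Matrix

/-- `Jmat k` is the `2k × 2k` real matrix `[[0, I],[-I, 0]]` in block form. -/
def Jmat (k : Type*) [Fintype k] [DecidableEq k] : Matrix (k ⊕ k) (k ⊕ k) ℝ :=
  Matrix.fromBlocks 0 1 (-1) 0

/-!
Compare both sides block by block. The upper-left blocks of `B̃ J D̃ᵀ` and of `-J C̃ᵀ` both vanish,
and the other three block equations are the transposes of the three stated conditions.
-/

section SymplecticForm

variable {k m₁ m₂ l₁ l₂ : Type*} [Fintype k] [DecidableEq k]

theorem fromBlocks_mul_Jmat_mul_transpose_fromBlocks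
    (P Q : Matrix m₁ k ℝ) (R S : Matrix m₂ k ℝ) (P' Q' : Matrix l₁ k ℝ) (R' S' : Matrix l₂ k ℝ) :
    fromBlocks P Q R S * Jmat k * (fromBlocks P' Q' R' S')ᵀ =
      fromBlocks (P * Q'ᵀ - Q * P'ᵀ) (P * S'ᵀ - Q * R'ᵀ)
        (R * Q'ᵀ - S * P'ᵀ) (R * S'ᵀ - S * R'ᵀ) := by
  simp only [Jmat, fromBlocks_transpose, fromBlocks_multiply, Matrix.mul_zero, Matrix.mul_one,
    Matrix.mul_neg, Matrix.neg_mul, zero_add, add_zero, neg_add_eq_sub]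

theorem Jmat_mul_transpose_fromBlocks
    (A B : Matrix m₁ k ℝ) (C D : Matrix m₂ k ℝ) :
    Jmat k * (fromBlocks A B C D)ᵀ = fromBlocks Bᵀ Dᵀ (-Aᵀ) (-Cᵀ) := by
  simp [Jmat, fromBlocks_transpose, fromBlocks_multiply]

end SymplecticForm

theorem fromCols_mul_transpose_fromCols {R m l n₁ n₂ : Type*} [Semiring R]
    [Fintype n₁] [Fintype n₂]
    (A₁ : Matrix m n₁ R) (A₂ : Matrix m n₂ R) (B₁ : Matrix l n₁ R) (B₂ : Matrix l n₂ R) :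
    fromCols A₁ A₂ * (fromCols B₁ B₂)ᵀ = A₁ * B₁ᵀ + A₂ * B₂ᵀ := by
  rw [transpose_fromCols, fromCols_mul_fromRows]

theorem stmt_3_general (n nv1 nv2 ny : ℕ)
    (B B₁ B₃ : Matrix (Fin n) (Fin nv1) ℝ) (B₂ B₄ : Matrix (Fin n) (Fin nv2) ℝ)
    (C C₁ C₂ : Matrix (Fin ny) (Fin n) ℝ)
    (D D₂ D₄ : Matrix (Fin ny) (Fin nv2) ℝ) (D₁ D₃ : Matrix (Fin ny) (Fin nv1) ℝ) :
    (Matrix.fromBlocks (Matrix.fromCols B 0) 0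
        (Matrix.fromCols B₁ B₂) (Matrix.fromCols B₃ B₄)
      * Jmat (Fin nv1 ⊕ Fin nv2)
      * (Matrix.fromBlocks (Matrix.fromCols 0 D) 0
          (Matrix.fromCols D₁ D₂) (Matrix.fromCols D₃ D₄))ᵀ
      = -(Jmat (Fin n) * (Matrix.fromBlocks C 0 C₁ C₂)ᵀ))
    ↔ (C₂ = -(D₃ * Bᵀ) ∧ B₄ * Dᵀ = -Cᵀ ∧
        C₁ = D₄ * B₂ᵀ + D₃ * B₁ᵀ - D₂ * B₄ᵀ - D₁ * B₃ᵀ) := by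
  rw [fromBlocks_mul_Jmat_mul_transpose_fromBlocks, Jmat_mul_transpose_fromBlocks,
    fromBlocks_neg, fromBlocks_inj]
  simp only [fromCols_mul_transpose_fromCols, transpose_zero, Matrix.mul_zero, Matrix.zero_mul,
    add_zero, zero_add, sub_zero, zero_sub, neg_zero, neg_neg, true_and]
  refine and_congr ?_ (and_congr ?_ ?_)
  · rw [← transpose_inj, transpose_mul, transpose_transpose, transpose_neg, transpose_transpose,
      eq_neg_iff_add_eq_zero, add_comm, ← eq_neg_iff_add_eq_zero]
  · rw [neg_eq_iff_eq_neg]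
  · rw [← transpose_inj, transpose_transpose, eq_comm]
    simp only [transpose_sub, transpose_add, transpose_mul, transpose_transpose]
    exact Eq.congr_right (by abel)

theorem stmt_3 (n nv1 nv2 ny : ℕ) (hn : 0 < n) (hv1 : 0 < nv1) (hv2 : 0 < nv2) (hy : 0 < ny)
    (B B₁ B₃ : Matrix (Fin n) (Fin nv1) ℝ) (B₂ B₄ : Matrix (Fin n) (Fin nv2) ℝ)
    (C C₁ C₂ : Matrix (Fin ny) (Fin n) ℝ)
    (D D₂ D₄ : Matrix (Fin ny) (Fin nv2) ℝ) (D₁ D₃ : Matrix (Fin ny) (Fin nv1) ℝ) :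
    (Matrix.fromBlocks (Matrix.fromCols B 0) 0
        (Matrix.fromCols B₁ B₂) (Matrix.fromCols B₃ B₄)
      * Jmat (Fin nv1 ⊕ Fin nv2)
      * (Matrix.fromBlocks (Matrix.fromCols 0 D) 0
          (Matrix.fromCols D₁ D₂) (Matrix.fromCols D₃ D₄))ᵀ
      = -(Jmat (Fin n) * (Matrix.fromBlocks C 0 C₁ C₂)ᵀ))
    ↔ (C₂ = -(D₃ * Bᵀ) ∧ B₄ * Dᵀ = -Cᵀ ∧
        C₁ = D₄ * B₂ᵀ + D₃ * B₁ᵀ - D₂ * B₄ᵀ - D₁ * B₃ᵀ) :=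
  stmt_3_general n nv1 nv2 ny B B₁ B₃ B₂ B₄ C C₁ C₂ D D₂ D₄ D₁ D₃
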